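/- arXiv:2002.10498 — 2 statements merged into one kernel-verified Lean document; each statement's English description precedes it below -/
import Mathlib

section
/- (Weak Extension Property, existence) Let fW be an omnitig in a strongly connected graph G, where f is a join arc and W is a join-free path. Then there exists at least one arc g with tail(g) = head(W) such that there is a path from head(g) to head(f) in G with the arc f removed. -/
/-- A directed multigraph: arcs `E` with tail and head maps into nodes `V`. -/
structure MultiDigraph (V E : Type) where
  tail : E → V
  head : E → V

namespace MultiDigraph

variable {V E : Type} (G : MultiDigraph V E)

/-- A walk is a (possibly empty) list of arcs that chain head-to-tail. -/
def IsWalk (W : List E) : Prop := W.Chain' (fun a b => G.head a = G.tail b)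

/-- The node sequence `v₀, v₁, …, v_ℓ` of a nonempty walk (empty for the empty walk). -/
def nodes : List E → List V
  | [] => []
  | e :: W => G.tail e :: (e :: W).map G.head

/-- The start node of a nonempty walk. -/
def src (W : List E) : Option V := W.head?.map G.tail

/-- The end node of a nonempty walk. -/
def dst (W : List E) : Option V := W.getLast?.map G.head

/-- A path: a walk whose nodes are all distinct, except that the last node may
equal the first one (closed path). -/
def IsPath (W : List E) : Prop :=
  G.IsWalk W ∧ (G.nodes W).dropLast.Nodup ∧ (G.nodes W).tail.Nodup

/-- `P` is a forbidden path for the pair of arcs `(eR, eL)`: a non-empty path from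
`tail eR` to `head eL` whose first arc differs from `eR` and last arc differs from `eL`. -/
def ForbiddenPath (eR eL : E) (P : List E) : Prop :=
  G.IsPath P ∧ P ≠ [] ∧ G.src P = some (G.tail eR) ∧ G.dst P = some (G.head eL) ∧
    P.head? ≠ some eR ∧ P.getLast? ≠ some eL

/-- A walk `e₀ … e_ℓ` is an omnitig if for all `1 ≤ i ≤ j ≤ ℓ` there is no
forbidden path from `tail e_j` to `head e_{i-1}`. -/
def IsOmnitig (W : List E) : Prop :=
  G.IsWalk W ∧ ∀ i j : ℕ, (hi : 1 ≤ i) → (hij : i ≤ j) → (hj : j < W.length) →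
    ¬ ∃ P, G.ForbiddenPath (W[j]'hj) (W[i-1]'(by omega)) P

/-- `u` reaches `v` by a (possibly empty) walk. -/
def Reaches (u v : V) : Prop :=
  u = v ∨ ∃ W, G.IsWalk W ∧ G.src W = some u ∧ G.dst W = some v

def StronglyConnected : Prop := ∀ u v : V, G.Reaches u v

/-- In-degree of a node. -/
noncomputable def inDeg (v : V) : ℕ := Nat.card {e : E // G.head e = v}

/-- Out-degree of a node. -/
noncomputable def outDeg (v : V) : ℕ := Nat.card {e : E // G.tail e = v}

def JoinArc (e : E) : Prop := 1 < G.inDeg (G.head e)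

def SplitArc (e : E) : Prop := 1 < G.outDeg (G.tail e)

def Bivalent (v : V) : Prop := 1 < G.inDeg v ∧ 1 < G.outDeg v

def JoinFree (W : List E) : Prop := ∀ e ∈ W, ¬ G.JoinArc e

def SplitFree (W : List E) : Prop := ∀ e ∈ W, ¬ G.SplitArc e

/-- A closed walk covering every arc at least once. -/
def IsClosedArcCovering (W : List E) : Prop :=
  G.IsWalk W ∧ W ≠ [] ∧ G.src W = G.dst W ∧ ∀ e : E, e ∈ W

/-- `W'` occurs as a cyclic (wrap-around) subwalk of the closed walk `W`. -/
def IsCyclicSubwalk (W' W : List E) : Prop :=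
  ∃ i : ℕ, ∀ k : ℕ, k < W'.length → W'[k]? = W[(i + k) % W.length]?

/-- The graph consists of a single closed path through all nodes and arcs. -/
def IsClosedPathGraph : Prop :=
  ∃ C : List E, G.IsPath C ∧ C ≠ [] ∧ G.src C = G.dst C ∧ C.Nodup ∧
    (∀ e : E, e ∈ C) ∧ (∀ v : V, v ∈ G.nodes C)

/-- Compressed graph: no biunivocal nodes and no biunivocal arcs. -/
def Compressed : Prop :=
  (∀ v : V, 1 < G.inDeg v ∨ 1 < G.outDeg v) ∧
  (∀ e : E, G.JoinArc e ∨ G.SplitArc e)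

/-- `u` reaches `v` by a (possibly empty) path avoiding the arc `f`. -/
def ReachesAvoid (f : E) (u v : V) : Prop :=
  u = v ∨ ∃ P, G.IsPath P ∧ f ∉ P ∧ G.src P = some u ∧ G.dst P = some v

/-- A maximal omnitig: an omnitig extendable neither to the left nor to the right. -/
def IsMaximalOmnitig (W : List E) : Prop :=
  G.IsOmnitig W ∧ (∀ e : E, ¬ G.IsOmnitig (e :: W)) ∧ (∀ e : E, ¬ G.IsOmnitig (W ++ [e]))

/-- The reverse graph. -/
def rev : MultiDigraph V E := ⟨G.head, G.tail⟩

/-- Nodes reachable from `v` by a join-free path. -/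
def Rplus (v : V) : Set V :=
  {u | u = v ∨ ∃ W, G.IsPath W ∧ G.JoinFree W ∧ G.src W = some v ∧ G.dst W = some u}

/-- Nodes reaching `v` by a split-free path. -/
def Rminus (v : V) : Set V :=
  {u | u = v ∨ ∃ W, G.IsPath W ∧ G.SplitFree W ∧ G.src W = some u ∧ G.dst W = some v}

/-- The node set of the macronode centered at `v`. -/
def macronodeSet (v : V) : Set V := G.Rplus v ∪ G.Rminus v

/-- The graph obtained from `G` by contracting the arc `e`. -/
def contract [DecidableEq V] (e : E) : MultiDigraph V {a : E // a ≠ e} where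
  tail a := if G.tail a.1 = G.head e then G.tail e else G.tail a.1
  head a := if G.head a.1 = G.head e then G.tail e else G.head a.1

end MultiDigraph

/-!
A join arc `f` has a sibling `f'` with the same head. A walk from `head f` to `tail f'`,
followed by `f'` and cut after its last occurrence of `f`, is a closed walk through `head f`
in `G - f`. Its start can then be pushed along `W`: an `f`-avoiding walk from `tail w`, for an
arc `w` of `W`, shortens to an `f`-avoiding path, which must begin with `w` since otherwise it
would be a forbidden path for the pair `(w, f)` of the omnitig `fW`. The rest of that path
starts at `head w` and is nonempty, since `head w`, unlike `head f`, is not a join node. At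
`head W` the first arc of the walk is the required `g`.
-/

namespace MultiDigraph

variable {V E : Type} {G : MultiDigraph V E}

@[simp] lemma src_cons (e : E) (L : List E) : G.src (e :: L) = some (G.tail e) := rfl

@[simp] lemma dst_singleton (e : E) : G.dst [e] = some (G.head e) := rfl

lemma dst_cons {L : List E} (e : E) (hL : L ≠ []) : G.dst (e :: L) = G.dst L := by
  simp [dst, List.getLast?_cons, List.getLast?_eq_some_getLast hL]

lemma dst_append {M : List E} (L : List E) (hM : M ≠ []) : G.dst (L ++ M) = G.dst M := by
  simp [dst, List.getLast?_append, List.getLast?_eq_some_getLast hM]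

lemma src_append {L : List E} (hL : L ≠ []) (M : List E) : G.src (L ++ M) = G.src L := by
  obtain ⟨e, L, rfl⟩ := List.exists_cons_of_ne_nil hL
  rfl

lemma isWalk_cons_cons {a b : E} {L : List E} :
    G.IsWalk (a :: b :: L) ↔ G.head a = G.tail b ∧ G.IsWalk (b :: L) :=
  List.isChain_cons_cons

lemma IsWalk.of_cons {e : E} {L : List E} (hW : G.IsWalk (e :: L)) : G.IsWalk L :=
  List.IsChain.tail hW

lemma IsWalk.src_of_cons {e : E} {L : List E} (hW : G.IsWalk (e :: L)) (hL : L ≠ []) :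
    G.src L = some (G.head e) := by
  obtain ⟨b, L, rfl⟩ := List.exists_cons_of_ne_nil hL
  simp [(isWalk_cons_cons.1 hW).1]

lemma nodes_cons_cons {a b : E} {L : List E} (h : G.head a = G.tail b) :
    G.nodes (a :: b :: L) = G.tail a :: G.nodes (b :: L) := by
  simp [nodes, h]

lemma nodes_tail (L : List E) : (G.nodes L).tail = L.map G.head := by
  cases L <;> rfl

lemma IsWalk.dropLast_nodes : ∀ {L : List E}, G.IsWalk L → (G.nodes L).dropLast = L.map G.tail
  | [], _ => rfl
  | [_], _ => rfl
  | a :: b :: L, hW => by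
    obtain ⟨hab, hW⟩ := isWalk_cons_cons.1 hW
    rw [nodes_cons_cons hab, List.dropLast_cons_of_ne_nil (by cases L <;> simp [nodes]),
      hW.dropLast_nodes]; rfl

lemma isPath_iff {L : List E} :
    G.IsPath L ↔ G.IsWalk L ∧ (L.map G.tail).Nodup ∧ (L.map G.head).Nodup := by
  unfold IsPath
  rw [nodes_tail]
  exact and_congr_right fun hW => by rw [hW.dropLast_nodes]

lemma isPath_cons {e : E} {P : List E} (hP : G.IsPath P) (hsrc : G.src P = some (G.head e))
    (htail : G.tail e ∉ P.map G.tail) (hhead : G.head e ∉ P.map G.head) : G.IsPath (e :: P) := by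
  obtain ⟨hW, h₁, h₂⟩ := isPath_iff.1 hP
  refine isPath_iff.2 ⟨?_, h₁.cons htail, h₂.cons hhead⟩
  rcases P with _ | ⟨p, P⟩
  · exact List.isChain_singleton e
  · exact isWalk_cons_cons.2 ⟨(Option.some_injective _ hsrc).symm, hW⟩

theorem IsWalk.exists_isPath_subset {L : List E} (hW : G.IsWalk L) (hL : L ≠ []) :
    ∃ P, G.IsPath P ∧ P ≠ [] ∧ P ⊆ L ∧ G.src P = G.src L ∧ G.dst P = G.dst L := by
  induction h : L.length using Nat.strong_induction_on generalizing L with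
  | _ n ih =>
  subst h
  obtain ⟨e, L, rfl⟩ := List.exists_cons_of_ne_nil hL
  have shortcut : ∀ M, G.IsWalk M → M ≠ [] → M.length < (e :: L).length → M ⊆ e :: L →
      G.src M = some (G.tail e) → G.dst M = G.dst (e :: L) →
      ∃ P, G.IsPath P ∧ P ≠ [] ∧ P ⊆ e :: L ∧ G.src P = G.src (e :: L) ∧
        G.dst P = G.dst (e :: L) := by
    intro M hMW hM hlt hsub hsrc hdst
    obtain ⟨P, hP, hPne, hPM, hPs, hPd⟩ := ih _ hlt hMW hM rfl
    exact ⟨P, hP, hPne, List.Subset.trans hPM hsub, hPs.trans hsrc, hPd.trans hdst⟩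
  -- If the walk later leaves or enters the node it starts from, skip to there; otherwise
  -- prepend `e` to a path obtained from the rest of the walk.
  by_cases htail : G.tail e ∈ L.map G.tail
  · obtain ⟨e', he', hee'⟩ := List.mem_map.1 htail
    obtain ⟨A, B, rfl⟩ := List.append_of_mem he'
    refine shortcut (e' :: B) ?_ (List.cons_ne_nil _ _) (by simp) ?_ (by simp [hee'])
      (by rw [← List.cons_append, dst_append _ (List.cons_ne_nil _ _)])
    · exact hW.suffix ⟨e :: A, by simp⟩
    · intro x hx; simp at hx ⊢; tauto
  by_cases hhead : G.head e ∈ L.map G.head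
  · obtain ⟨e', he', hee'⟩ := List.mem_map.1 hhead
    obtain ⟨A, B, rfl⟩ := List.append_of_mem he'
    refine shortcut (e :: B) ?_ (List.cons_ne_nil _ _) (by simp) ?_ rfl ?_
    · rcases B with _ | ⟨b, B⟩
      · exact List.isChain_singleton e
      · have hsuffix : G.IsWalk (e' :: b :: B) := hW.suffix ⟨e :: A, by simp⟩
        obtain ⟨he'b, hbW⟩ := isWalk_cons_cons.1 hsuffix
        exact isWalk_cons_cons.2 ⟨hee' ▸ he'b, hbW⟩
    · intro x hx; simp at hx ⊢; tauto
    · rw [← List.cons_append, dst_append _ (List.cons_ne_nil _ _)]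
      rcases B with _ | ⟨b, B⟩
      · simp [hee']
      · rw [dst_cons _ (List.cons_ne_nil _ _), dst_cons _ (List.cons_ne_nil _ _)]
  rcases L with _ | ⟨b, L⟩
  · exact ⟨[e], isPath_iff.2 ⟨List.isChain_singleton e, by simp, by simp⟩, List.cons_ne_nil _ _,
      List.Subset.refl _, rfl, rfl⟩
  obtain ⟨heb, hbW⟩ := isWalk_cons_cons.1 hW
  obtain ⟨P, hP, hPne, hPL, hPs, hPd⟩ := ih _ (by simp) hbW (List.cons_ne_nil _ _) rfl
  refine ⟨e :: P, isPath_cons hP (by rw [hPs, heb]; rfl) ?_ ?_, List.cons_ne_nil _ _,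
    List.cons_subset_cons _ hPL, rfl, ?_⟩
  · exact fun h => htail (List.map_subset _ hPL h)
  · exact fun h => hhead (List.map_subset _ hPL h)
  · rw [dst_cons _ hPne, dst_cons _ (List.cons_ne_nil _ _), hPd]

lemma Reaches.exists_isWalk_append {u : V} {e : E} (h : G.Reaches u (G.tail e)) :
    ∃ Y, G.IsWalk (Y ++ [e]) ∧ G.src (Y ++ [e]) = some u := by
  rcases h with rfl | ⟨Y, hY, hs, hd⟩
  · exact ⟨[], List.isChain_singleton e, rfl⟩
  have hY0 : Y ≠ [] := by rintro rfl; simp [src] at hs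
  refine ⟨Y, List.isChain_append.2 ⟨hY, List.isChain_singleton e, ?_⟩, by rw [src_append hY0, hs]⟩
  intro x hx y hy
  simp only [List.head?_cons, Option.mem_def, Option.some.injEq] at hy
  simpa [dst, Option.mem_def.1 hx, hy] using hd

lemma JoinArc.exists_ne_head_eq {f : E} (hf : G.JoinArc f) :
    ∃ f', f' ≠ f ∧ G.head f' = G.head f := by
  have : Finite {e // G.head e = G.head f} := Nat.finite_of_card_ne_zero (by
    unfold JoinArc inDeg at hf; omega)
  have := Finite.one_lt_card_iff_nontrivial.1 hf
  obtain ⟨⟨f', hf'⟩, hne⟩ := exists_ne (⟨f, rfl⟩ : {e // G.head e = G.head f})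
  exact ⟨f', fun h => hne (Subtype.ext h), hf'⟩

lemma JoinFree.head_ne {W : List E} {f : E} (hW : G.JoinFree W) (hf : G.JoinArc f) :
    ∀ w ∈ W, G.head w ≠ G.head f :=
  fun w hw h => hW w hw (by rwa [JoinArc, h])

def IsAvoidingWalk (f : E) (u v : V) (Z : List E) : Prop :=
  G.IsWalk Z ∧ Z ≠ [] ∧ f ∉ Z ∧ G.src Z = some u ∧ G.dst Z = some v

theorem JoinArc.exists_isAvoidingWalk_self (hG : G.StronglyConnected) {f : E}
    (hf : G.JoinArc f) : ∃ Z, G.IsAvoidingWalk f (G.head f) (G.head f) Z := by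
  obtain ⟨f', hf'f, hf'⟩ := hf.exists_ne_head_eq
  obtain ⟨Y, hW, hsrc⟩ := (hG (G.head f) (G.tail f')).exists_isWalk_append
  by_cases hfY : f ∈ Y
  · obtain ⟨A, B, hAB, hfA⟩ := List.eq_append_cons_of_mem (List.mem_reverse.2 hfY)
    have hY : Y ++ [f'] = B.reverse ++ f :: (A.reverse ++ [f']) := by
      rw [← List.reverse_reverse Y, hAB]; simp
    rw [hY] at hW
    have hsuffix : G.IsWalk (f :: (A.reverse ++ [f'])) := hW.suffix ⟨B.reverse, rfl⟩
    refine ⟨A.reverse ++ [f'], hsuffix.of_cons, by simp, by simp [hfA, hf'f.symm],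
      hsuffix.src_of_cons (by simp), by simp [dst, hf']⟩
  · exact ⟨Y ++ [f'], hW, by simp, by simp [hfY, hf'f.symm], hsrc, by simp [dst, hf']⟩

theorem exists_isAvoidingWalk_from_dst {f : E} {x u : V} :
    ∀ {a : E} {W : List E}, G.IsWalk (a :: W) → G.dst (a :: W) = some u →
      (∀ w ∈ W, G.head w ≠ x) →
      (∀ w ∈ W, ∀ P, G.IsPath P → P ≠ [] → f ∉ P → G.src P = some (G.tail w) →
        G.dst P = some x → P.head? = some w) →
      ∀ {Z}, G.IsAvoidingWalk f (G.head a) x Z → ∃ Z', G.IsAvoidingWalk f u x Z'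
  | a, [], _, hu, _, _, Z, hZ => ⟨Z, Option.some_inj.1 hu ▸ hZ⟩
  | a, w :: W, hW, hu, hhead, hfirst, Z, ⟨hZW, hZne, hfZ, hs, hd⟩ => by
    obtain ⟨haw, hwW⟩ := isWalk_cons_cons.1 hW
    obtain ⟨P, hP, hPne, hPZ, hPs, hPd⟩ := hZW.exists_isPath_subset hZne
    have hfP : f ∉ P := fun h => hfZ (hPZ h)
    rw [hs, haw] at hPs
    rw [hd] at hPd
    obtain ⟨P, rfl⟩ : ∃ P', P = w :: P' := by
      have hw := hfirst w (by simp) P hP hPne hfP hPs hPd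
      rcases P with _ | ⟨p, P⟩
      · simp at hw
      · exact ⟨P, by simpa using hw⟩
    have hP'ne : P ≠ [] := by
      rintro rfl
      exact hhead w (by simp) (by simpa using hPd)
    refine exists_isAvoidingWalk_from_dst hwW (by rwa [dst_cons _ (List.cons_ne_nil _ _)] at hu)
      (fun w' hw' => hhead w' (by simp [hw'])) (fun w' hw' => hfirst w' (by simp [hw']))
      (Z := P) ⟨(isPath_iff.1 hP).1.of_cons, hP'ne, fun h => hfP (List.mem_cons_of_mem _ h),
        (isPath_iff.1 hP).1.src_of_cons hP'ne, by rwa [dst_cons _ hP'ne] at hPd⟩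

lemma IsOmnitig.head?_eq_of_isPath {f w : E} {W P : List E} (ho : G.IsOmnitig (f :: W))
    (hw : w ∈ W) (hP : G.IsPath P) (hPne : P ≠ []) (hfP : f ∉ P)
    (hs : G.src P = some (G.tail w)) (hd : G.dst P = some (G.head f)) : P.head? = some w := by
  obtain ⟨k, hk, rfl⟩ := List.getElem_of_mem hw
  by_contra hne
  exact ho.2 1 (k + 1) le_rfl (by omega) (by simpa using hk)
    ⟨P, hP, hPne, hs, hd, hne, fun h => hfP (List.mem_of_getLast? h)⟩

lemma IsWalk.reachesAvoid_head {f g : E} {Z : List E} {v : V} (hW : G.IsWalk (g :: Z))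
    (hfZ : f ∉ Z) (hd : G.dst (g :: Z) = some v) : G.ReachesAvoid f (G.head g) v := by
  rcases eq_or_ne Z [] with rfl | hZ
  · exact Or.inl (by simpa using hd)
  obtain ⟨P, hP, -, hPZ, hPs, hPd⟩ := hW.of_cons.exists_isPath_subset hZ
  exact Or.inr ⟨P, hP, fun h => hfZ (hPZ h), hPs.trans (hW.src_of_cons hZ),
    hPd.trans ((dst_cons g hZ).symm.trans hd)⟩

end MultiDigraph

theorem stmt_6_general {V E : Type}
    (G : MultiDigraph V E) (hG : G.StronglyConnected)
    (f : E) (W : List E) (hf : G.JoinArc f)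
    (hWj : G.JoinFree W)
    (ho : G.IsOmnitig (f :: W)) :
    ∃ g : E, G.dst (f :: W) = some (G.tail g) ∧
      G.ReachesAvoid f (G.head g) (G.head f) := by
  obtain ⟨u, hu⟩ : ∃ u, G.dst (f :: W) = some u := ⟨_, rfl⟩
  obtain ⟨Z₀, hZ₀⟩ := hf.exists_isAvoidingWalk_self hG
  obtain ⟨Z, hZW, hZne, hfZ, hZs, hZd⟩ := MultiDigraph.exists_isAvoidingWalk_from_dst ho.1 hu
    (hWj.head_ne hf) (fun w hw _ => ho.head?_eq_of_isPath hw) hZ₀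
  obtain ⟨g, Z, rfl⟩ := List.exists_cons_of_ne_nil hZne
  exact ⟨g, hu.trans hZs.symm, hZW.reachesAvoid_head (fun h => hfZ (by simp [h])) hZd⟩

/-- Weak Extension Property, existence: if `fW` is an omnitig with
`f` a join arc and `W` a join-free path, then some arc `g` leaves `head(W)` such
that `head g` reaches `head f` in `G` minus `f`. -/
theorem stmt_6 {V E : Type} [Fintype V] [Fintype E]
    (G : MultiDigraph V E) (hG : G.StronglyConnected)
    (f : E) (W : List E) (hf : G.JoinArc f)
    (hWp : G.IsPath W) (hWj : G.JoinFree W)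
    (ho : G.IsOmnitig (f :: W)) :
    ∃ g : E, G.dst (f :: W) = some (G.tail g) ∧
      G.ReachesAvoid f (G.head g) (G.head f) :=
  stmt_6_general G hG f W hf hWj ho
end

section
/- In a compressed strongly connected graph, if fWg is a walk where f is a join arc and g is a split arc, then W contains an internal node that is bivalent; and if gWf is a walk where g is a split arc and f is a join arc, then gWf contains a bivalent arc. -/
/-!
If no internal node of `fWg` were bivalent, joinness would propagate along the walk: a join arc
with non-bivalent head enters a node of out-degree at most one, so the next arc is not split and,
the graph being compressed, is join. The last arc before `g` would then be a join arc entering the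
tail of the split arc `g`, a bivalent node. Likewise, if `gWf` had no bivalent arc, splitness
would propagate: an arc that is not join enters a node of in-degree at most one, which in a
compressed graph has out-degree at least two. Then `f` would be both join and split.
-/

namespace MultiDigraph

variable {V E : Type} {G : MultiDigraph V E}

theorem IsWalk.forall_of_head {P : E → Prop} {W : List E} (hW : G.IsWalk W)
    (hstep : ∀ a ∈ W, ∀ b, P a → G.head a = G.tail b → P b)
    (hfirst : ∀ hne : W ≠ [], P (W.head hne)) :
    ∀ e ∈ W, P e :=
  List.IsChain.induction P W (List.IsChain.iff_mem.1 hW)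
    (fun _ _ ⟨hx, _, hxy⟩ hPx => hstep _ hx _ hPx hxy) hfirst

theorem nodes_drop_one_dropLast (f g : E) (W : List E) :
    ((G.nodes (f :: (W ++ [g]))).drop 1).dropLast = (f :: W).map G.head := by
  simp only [nodes, List.drop_one, List.tail_cons]
  rw [← List.cons_append, List.map_append, List.map_singleton, List.dropLast_concat]

theorem joinArc_of_head_eq_tail (hc : G.Compressed) {a b : E} (ha : G.JoinArc a)
    (hv : ¬ G.Bivalent (G.head a)) (hab : G.head a = G.tail b) : G.JoinArc b :=
  (hc.2 b).resolve_right fun hb => hv ⟨ha, hab ▸ hb⟩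

theorem splitArc_of_not_joinArc (hc : G.Compressed) {a b : E} (ha : ¬ G.JoinArc a)
    (hab : G.head a = G.tail b) : G.SplitArc b :=
  show 1 < G.outDeg (G.tail b) from hab ▸ (hc.1 (G.head a)).resolve_left ha

theorem exists_bivalent_head_of_joinArc_splitArc (hc : G.Compressed) {f g : E} {W : List E}
    (hf : G.JoinArc f) (hg : G.SplitArc g) (hW : G.IsWalk (f :: (W ++ [g]))) :
    ∃ v ∈ (f :: W).map G.head, G.Bivalent v := by
  by_contra! hno
  obtain ⟨hprefix, -, hlink⟩ := List.isChain_append.1 (show G.IsWalk (f :: W ++ [g]) from hW)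
  have hjoin : ∀ e ∈ f :: W, G.JoinArc e :=
    IsWalk.forall_of_head hprefix
      (fun a ha _ hja hab => joinArc_of_head_eq_tail hc hja (hno _ (List.mem_map_of_mem ha)) hab)
      (fun _ => hf)
  set e := (f :: W).getLast (List.cons_ne_nil f W)
  have he : e ∈ f :: W := List.getLast_mem _
  have heg : G.head e = G.tail g :=
    hlink e (List.getLast?_eq_some_getLast _) g (by simp)
  exact hno _ (List.mem_map_of_mem he) ⟨hjoin e he, heg ▸ hg⟩

theorem exists_joinArc_splitArc_of_splitArc_joinArc (hc : G.Compressed) {g f : E}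
    {W : List E} (hg : G.SplitArc g) (hf : G.JoinArc f) (hW : G.IsWalk (g :: (W ++ [f]))) :
    ∃ e ∈ g :: (W ++ [f]), G.JoinArc e ∧ G.SplitArc e := by
  by_contra! hno
  have hsplit : ∀ e ∈ g :: (W ++ [f]), G.SplitArc e :=
    IsWalk.forall_of_head hW
      (fun a ha _ hsa hab => splitArc_of_not_joinArc hc (fun hja => hno a ha hja hsa) hab)
      (fun _ => hg)
  exact hno f (by simp) hf (hsplit f (by simp))

end MultiDigraph

theorem stmt_17_general {V E : Type}
    (G : MultiDigraph V E) (hc : G.Compressed) :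
    (∀ (f : E) (W : List E) (g : E), G.JoinArc f → G.SplitArc g →
      G.IsWalk (f :: (W ++ [g])) →
      ∃ v ∈ ((G.nodes (f :: (W ++ [g]))).drop 1).dropLast, G.Bivalent v) ∧
    (∀ (g : E) (W : List E) (f : E), G.SplitArc g → G.JoinArc f →
      G.IsWalk (g :: (W ++ [f])) →
      ∃ e ∈ g :: (W ++ [f]), G.JoinArc e ∧ G.SplitArc e) := by
  refine ⟨fun f W g hf hg hW => ?_, fun g W f hg hf hW => ?_⟩
  · rw [MultiDigraph.nodes_drop_one_dropLast]
    exact MultiDigraph.exists_bivalent_head_of_joinArc_splitArc hc hf hg hW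
  · exact MultiDigraph.exists_joinArc_splitArc_of_splitArc_joinArc hc hg hf hW

/-- in a compressed strongly connected graph, a walk `fWg` with `f`
join and `g` split has an internal bivalent node, and a walk `gWf` with `g` split
and `f` join contains a bivalent arc. -/
theorem stmt_17 {V E : Type} [Fintype V] [Fintype E]
    (G : MultiDigraph V E) (hG : G.StronglyConnected) (hc : G.Compressed) :
    (∀ (f : E) (W : List E) (g : E), G.JoinArc f → G.SplitArc g →
      G.IsWalk (f :: (W ++ [g])) →
      ∃ v ∈ ((G.nodes (f :: (W ++ [g]))).drop 1).dropLast, G.Bivalent v) ∧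
    (∀ (g : E) (W : List E) (f : E), G.SplitArc g → G.JoinArc f →
      G.IsWalk (g :: (W ++ [f])) →
      ∃ e ∈ g :: (W ++ [f]), G.JoinArc e ∧ G.SplitArc e) :=
  stmt_17_general G hc
end
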